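/- arXiv:1004.4827 — 3 statements merged into one kernel-verified Lean document; each statement's English description precedes it below -/
import Mathlib

section
/- If D is a minimal strongly connected digraph, then every strongly connected subdigraph of D is also a minimal strongly connected digraph. -/
/-- Reachability in a digraph given by its arc set `A`. -/
def Reach {α : Type*} (A : Finset (α × α)) (u v : α) : Prop :=
  Relation.ReflTransGen (fun a b => (a, b) ∈ A) u v

/-- A digraph with vertex set `V` and arc set `A` is strongly connected if
every vertex reaches every other vertex by a directed path. -/
def StrongConn {α : Type*} (V : Finset α) (A : Finset (α × α)) : Prop :=
  ∀ u ∈ V, ∀ v ∈ V, Reach A u v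

/-- Minimal strongly connected: strongly connected and removing any arc
destroys strong connectivity. -/
def MSC {α : Type*} [DecidableEq α] (V : Finset α) (A : Finset (α × α)) : Prop :=
  StrongConn V A ∧ ∀ a ∈ A, ¬ StrongConn V (A.erase a)

/-- `l` is a directed (simple) path from `u` to `v` in the digraph with arc set `A`. -/
def IsPath {α : Type*} (A : Finset (α × α)) (u v : α) (l : List α) : Prop :=
  l.Chain' (fun a b => (a, b) ∈ A) ∧ l.head? = some u ∧ l.getLast? = some v ∧ l.Nodup

/-- `(u,v)` is a transitive arc: it is an arc and there is a directed path from
`u` to `v` distinct from the single arc `(u,v)`. -/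
def TransArc {α : Type*} (A : Finset (α × α)) (u v : α) : Prop :=
  (u, v) ∈ A ∧ ∃ l, IsPath A u v l ∧ l ≠ [u, v]

/-- `l` (a list of distinct vertices, of length ≥ 2) is a directed cycle:
consecutive vertices are joined by arcs, and there is an arc from the last
vertex back to the first. -/
def IsCycle {α : Type*} (A : Finset (α × α)) (l : List α) : Prop :=
  ∃ h : l ≠ [], l.Nodup ∧ 2 ≤ l.length ∧
    List.Chain (fun a b => (a, b) ∈ A) (l.getLast h) l

/-- Well-formedness: nonempty vertex set, arcs join vertices of `V`, no loops. -/
def GoodDigraph {α : Type*} (V : Finset α) (A : Finset (α × α)) : Prop :=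
  V.Nonempty ∧ ∀ a ∈ A, a.1 ∈ V ∧ a.2 ∈ V ∧ a.1 ≠ a.2

/-- Outdegree of a vertex. -/
def outdeg {α : Type*} [DecidableEq α] (A : Finset (α × α)) (v : α) : ℕ :=
  (A.filter (fun a => a.1 = v)).card

/-- Indegree of a vertex. -/
def indeg {α : Type*} [DecidableEq α] (A : Finset (α × α)) (v : α) : ℕ :=
  (A.filter (fun a => a.2 = v)).card

/-- A linear vertex has indegree and outdegree equal to 1. -/
def LinearVertex {α : Type*} [DecidableEq α] (A : Finset (α × α)) (v : α) : Prop :=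
  indeg A v = 1 ∧ outdeg A v = 1

/-- The digraph is a directed `n`-cycle: its vertices can be listed
`v₁, …, vₙ` so that the arcs are exactly `(v₁,v₂), …, (vₙ,v₁)`. -/
def IsCycleDigraph {α : Type*} [DecidableEq α] (V : Finset α) (A : Finset (α × α)) : Prop :=
  ∃ l : List α, l.Nodup ∧ 2 ≤ l.length ∧ l.toFinset = V ∧ A = (l.zip (l.rotate 1)).toFinset

/-- A directed tree: every arc is accompanied by its reverse, and the
underlying undirected graph (on the vertex set `V`) is a tree. -/
def IsDirTree {α : Type*} [DecidableEq α] (V : Finset α) (A : Finset (α × α)) : Prop :=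
  (∀ u v : α, (u, v) ∈ A → (v, u) ∈ A) ∧
  (SimpleGraph.fromRel (fun a b : {x // x ∈ V} => ((a : α), (b : α)) ∈ A)).IsTree

/-- `(V', A')` is the (internal or external) expansion of `(V, A)` by the new
vertex `v`.  Internal: an arc `(u,w)` is replaced by `(u,v)` and `(v,w)`.
External: the arcs `(u,v)` and `(v,w)` are added for vertices `u, w ∈ V`. -/
def IsExpansionBy {α : Type*} [DecidableEq α] (v : α) (V : Finset α) (A : Finset (α × α))
    (V' : Finset α) (A' : Finset (α × α)) : Prop :=
  v ∉ V ∧ V' = insert v V ∧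
    ((∃ u w, (u, w) ∈ A ∧ A' = insert (u, v) (insert (v, w) (A.erase (u, w)))) ∨
     (∃ u ∈ V, ∃ w ∈ V, A' = insert (u, v) (insert (v, w) A)))

/-! An arc `(x, y)` of a strongly connected digraph is redundant exactly when `y` is still
reachable from `x` without it, since any path using the arc can then be rerouted. So in an MSC
digraph no arc has such a bypass; a bypass inside a subdigraph would be one in `D` as well. -/

theorem Reach.mono {α : Type*} {A B : Finset (α × α)} (hAB : A ⊆ B) {u v : α}
    (h : Reach A u v) : Reach B u v :=
  Relation.ReflTransGen.mono (fun _ _ hxy => hAB hxy) _ _ h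

theorem Reach.erase_of_reach_erase {α : Type*} [DecidableEq α] {A : Finset (α × α)}
    {a : α × α} (hbypass : Reach (A.erase a) a.1 a.2) {u v : α} (h : Reach A u v) :
    Reach (A.erase a) u v := by
  induction h with
  | refl => exact Relation.ReflTransGen.refl
  | @tail b c _ hbc ih =>
    by_cases he : (b, c) = a
    · subst he
      exact ih.trans hbypass
    · exact ih.tail (Finset.mem_erase.mpr ⟨he, hbc⟩)

theorem MSC.not_reach_erase {α : Type*} [DecidableEq α] {V : Finset α} {A : Finset (α × α)}
    (h : MSC V A) {a : α × α} (ha : a ∈ A) : ¬ Reach (A.erase a) a.1 a.2 :=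
  fun hbypass => h.2 a ha fun u hu v hv => hbypass.erase_of_reach_erase (h.1 u hu v hv)

theorem stmt_1_general {α : Type*} [DecidableEq α] (V V' : Finset α) (A A' : Finset (α × α))
    (h : MSC V A) (hA : A' ⊆ A)
    (hsub : ∀ a ∈ A', a.1 ∈ V' ∧ a.2 ∈ V')
    (hsc : StrongConn V' A') : MSC V' A' := by
  refine ⟨hsc, fun a ha hsc' => h.not_reach_erase (hA ha) ?_⟩
  exact (hsc' a.1 (hsub a ha).1 a.2 (hsub a ha).2).mono (Finset.erase_subset_erase a hA)

/-- every strongly connected subdigraph of an MSC digraph is MSC. -/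
theorem stmt_1 {α : Type*} [DecidableEq α] (V V' : Finset α) (A A' : Finset (α × α))
    (h : MSC V A) (hV : V' ⊆ V) (hA : A' ⊆ A)
    (hsub : ∀ a ∈ A', a.1 ∈ V' ∧ a.2 ∈ V')
    (hsc : StrongConn V' A') : MSC V' A' :=
  stmt_1_general V V' A A' h hA hsub hsc
end

section
/- Let D = (V, A) be a minimal strongly connected digraph and let u, w ∈ V with u ≠ w and (u,w) ∉ A. The external expansion e_{uw}(D) of D by a new vertex v (adding v and the arcs (u,v), (v,w)) is minimal strongly connected if and only if the digraph D + (u,w) has no transitive arc distinct from (u,w). -/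
/-!
Contracting the new vertex `v` onto `w` turns walks of `e_{uw}(D)` into walks of `D + (u,w)`,
and conversely the arc `(u,w)` can be replaced by `u → v → w`; hence, for any arc set `B` on `V`,
the external expansion of `(V, B)` is strongly connected iff `(V, B + (u,w))` is. The two new
arcs are the only arcs into and out of `v`, so neither can be removed. Removing an old arc
`(p,q)` leaves the strongly connected digraph `D + (u,w)` strongly connected iff `p` still
reaches `q`, i.e. iff `(p,q)` is transitive in `D + (u,w)`.
-/

section Reach

variable {α : Type*} {A B : Finset (α × α)} {p q x y : α}

theorem Reach.mono_of_arcs (h : ∀ a ∈ A, Reach B a.1 a.2) (hxy : Reach A x y) : Reach B x y :=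
  Relation.reflTransGen_closed (fun a b hab => h (a, b) hab) _ _ hxy

theorem isPath_iff {l : List α} : IsPath A p q l ↔
    l.IsChain (fun a b => (a, b) ∈ A) ∧ l.head? = some p ∧ l.getLast? = some q ∧ l.Nodup :=
  Iff.rfl

theorem IsPath.reach {l : List α} (hl : IsPath A p q l) : Reach A p q := by
  obtain ⟨hc, hp, hq, -⟩ := isPath_iff.mp hl
  have hne : l ≠ [] := by rintro rfl; simp at hp
  rw [List.head?_eq_some_head hne, Option.some.injEq] at hp
  rw [List.getLast?_eq_some_getLast hne, Option.some.injEq] at hq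
  exact hp ▸ hq ▸ List.relationReflTransGen_of_exists_isChain l hc hne

/-- Prepending a vertex that is already on the path cuts off the loop. -/
theorem Reach.exists_isPath (h : Reach A p q) : ∃ l, IsPath A p q l := by
  induction h using Relation.ReflTransGen.head_induction_on with
  | refl => exact ⟨[q], isPath_iff.mpr (by simp)⟩
  | @head a c hac _ ih =>
    obtain ⟨l, hpath⟩ := ih
    obtain ⟨hc, hh, hl, hnd⟩ := isPath_iff.mp hpath
    by_cases ha : a ∈ l
    · obtain ⟨s, t, rfl⟩ := List.append_of_mem ha
      exact ⟨a :: t, hc.suffix ⟨s, rfl⟩, rfl, by rwa [← List.getLast?_append_cons],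
        (List.nodup_append.mp hnd).2.1⟩
    · obtain ⟨t, rfl⟩ : ∃ t, l = c :: t := by
        cases l with
        | nil => simp at hh
        | cons b t => exact ⟨t, by simpa using hh⟩
      exact ⟨a :: c :: t, List.isChain_cons_cons.mpr ⟨hac, hc⟩, rfl,
        by rwa [List.getLast?_cons_cons], List.nodup_cons.mpr ⟨ha, hnd⟩⟩

/-- `p` heads the path and `q` ends it, so by `Nodup` the arc `(p, q)` can only occur in
`[p, q]`. -/
theorem IsPath.isChain_erase [DecidableEq α] {l : List α} (hl : IsPath A p q l)
    (hne : l ≠ [p, q]) : l.IsChain (fun a b => (a, b) ∈ A.erase (p, q)) := by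
  obtain ⟨hc, hp, hq, hnd⟩ := isPath_iff.mp hl
  rw [List.isChain_iff_forall_rel_of_append_cons_cons] at hc ⊢
  rintro a b l₁ l₂ rfl
  refine Finset.mem_erase.mpr ⟨?_, hc rfl⟩
  rintro ⟨⟩
  apply hne
  obtain rfl : l₁ = [] := by
    cases l₁ with
    | nil => rfl
    | cons x t =>
      obtain rfl : x = p := by simpa using hp
      simp at hnd
  rw [List.nil_append] at hq hnd ⊢
  obtain rfl : l₂ = [] := by
    obtain rfl | ⟨l₃, z, rfl⟩ := l₂.eq_nil_or_concat'
    · rfl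
    · obtain rfl : z = q := by
        rw [← List.cons_append, ← List.cons_append, List.getLast?_concat] at hq
        exact Option.some.inj hq
      simp at hnd
  rfl

theorem reach_erase_iff_transArc [DecidableEq α] (hpq : (p, q) ∈ A) :
    Reach (A.erase (p, q)) p q ↔ TransArc A p q := by
  constructor
  · intro h
    obtain ⟨l, hl⟩ := h.exists_isPath
    obtain ⟨hc, hp, hq, hnd⟩ := isPath_iff.mp hl
    refine ⟨hpq, l, ⟨hc.imp fun a b => Finset.mem_of_mem_erase, hp, hq, hnd⟩, ?_⟩
    rintro rfl
    exact (Finset.mem_erase.mp (List.isChain_pair.mp hc)).1 rfl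
  · rintro ⟨-, l, hl, hne⟩
    exact IsPath.reach ⟨hl.isChain_erase hne, hl.2⟩

end Reach

section StrongConn

variable {α : Type*} {V : Finset α} {A : Finset (α × α)}

theorem not_strongConn_of_forall_not_mem_into {x v : α} (hx : x ∈ V) (hv : v ∈ V) (hxv : x ≠ v)
    (hA : ∀ c, (c, v) ∉ A) : ¬ StrongConn V A := fun h => by
  rcases (h x hx v hv).cases_tail with rfl | ⟨c, -, hc⟩
  exacts [hxv rfl, hA c hc]

theorem not_strongConn_of_forall_not_mem_out {x v : α} (hx : x ∈ V) (hv : v ∈ V) (hxv : x ≠ v)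
    (hA : ∀ c, (v, c) ∉ A) : ¬ StrongConn V A := fun h => by
  rcases (h v hv x hx).cases_head with rfl | ⟨c, hc, -⟩
  exacts [hxv rfl, hA c hc]

variable [DecidableEq α]

theorem strongConn_erase_iff_transArc {p q : α} (hA : StrongConn V A) (hp : p ∈ V) (hq : q ∈ V)
    (hpq : (p, q) ∈ A) : StrongConn V (A.erase (p, q)) ↔ TransArc A p q := by
  rw [← reach_erase_iff_transArc hpq]
  refine ⟨fun h => h p hp q hq, fun h x hx y hy => (hA x hx y hy).mono_of_arcs ?_⟩
  intro a ha
  by_cases hap : a = (p, q)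
  · subst hap
    exact h
  · exact Relation.ReflTransGen.single (Finset.mem_erase.mpr ⟨hap, ha⟩)

variable {u v w : α}

theorem strongConn_externalExpansion_iff (hA : ∀ a ∈ A, a.1 ∈ V ∧ a.2 ∈ V)
    (hu : u ∈ V) (hw : w ∈ V) (hv : v ∉ V) :
    StrongConn (insert v V) (insert (u, v) (insert (v, w) A)) ↔
      StrongConn V (insert (u, w) A) := by
  have expand : ∀ x y, Reach (insert (u, w) A) x y →
      Reach (insert (u, v) (insert (v, w) A)) x y := by
    refine fun x y => Reach.mono_of_arcs fun a ha => ?_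
    rcases Finset.mem_insert.mp ha with rfl | ha
    · exact .head (b := v) (by simp) (.single (by simp))
    · exact .single (by simp [ha])
  constructor
  · intro h x hx y hy
    let f : α → α := fun z => if z = v then w else z
    have hf : ∀ z ∈ V, f z = z := fun z hz =>
      if_neg fun hzv : z = v => hv (hzv ▸ hz)
    have hfv : f v = w := if_pos rfl
    have contract : ∀ a ∈ insert (u, v) (insert (v, w) A),
        Reach (insert (u, w) A) (f a.1) (f a.2) := by
      intro a ha
      rcases Finset.mem_insert.mp ha with rfl | ha
      · rw [hf u hu, hfv]
        exact .single (Finset.mem_insert_self _ _)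
      rcases Finset.mem_insert.mp ha with rfl | ha
      · rw [hfv, hf w hw]
        exact .refl
      · rw [hf _ (hA a ha).1, hf _ (hA a ha).2]
        exact .single (Finset.mem_insert_of_mem ha)
    have := Relation.ReflTransGen.lift' f (fun a b hab => contract (a, b) hab) x y
      (h x (Finset.mem_insert_of_mem hx) y (Finset.mem_insert_of_mem hy))
    rwa [Function.onFun, hf x hx, hf y hy] at this
  · intro h
    have to_w : ∀ x ∈ insert v V, Reach (insert (u, v) (insert (v, w) A)) x w := by
      intro x hx
      rcases Finset.mem_insert.mp hx with rfl | hx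
      · exact .single (by simp)
      · exact expand _ _ (h x hx w hw)
    have from_w : ∀ y ∈ insert v V, Reach (insert (u, v) (insert (v, w) A)) w y := by
      intro y hy
      rcases Finset.mem_insert.mp hy with rfl | hy
      · exact .tail (expand _ _ (h w hw u hu)) (by simp)
      · exact expand _ _ (h w hw y hy)
    exact fun x hx y hy => (to_w x hx).trans (from_w y hy)

theorem strongConn_externalExpansion_erase_iff {a : α × α} (hA : ∀ a ∈ A, a.1 ∈ V ∧ a.2 ∈ V)
    (hu : u ∈ V) (hw : w ∈ V) (hv : v ∉ V) (ha : a ∈ A) :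
    StrongConn (insert v V) ((insert (u, v) (insert (v, w) A)).erase a) ↔
      StrongConn V (insert (u, w) (A.erase a)) := by
  rw [Finset.erase_insert_of_ne (by rintro rfl; exact hv (hA _ ha).2),
    Finset.erase_insert_of_ne (by rintro rfl; exact hv (hA _ ha).1)]
  exact strongConn_externalExpansion_iff (fun b hb => hA b (Finset.mem_of_mem_erase hb)) hu hw hv

theorem not_strongConn_externalExpansion_erase_inArc (hA : ∀ a ∈ A, a.1 ∈ V ∧ a.2 ∈ V)
    (hu : u ∈ V) (hw : w ∈ V) (hv : v ∉ V) :
    ¬ StrongConn (insert v V) ((insert (u, v) (insert (v, w) A)).erase (u, v)) := by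
  refine not_strongConn_of_forall_not_mem_into (Finset.mem_insert_of_mem hu)
    (Finset.mem_insert_self v V) (ne_of_mem_of_not_mem hu hv) fun c hc => ?_
  obtain ⟨hne, hc⟩ := Finset.mem_erase.mp hc
  rcases Finset.mem_insert.mp hc with hc | hc
  · exact hne hc
  rcases Finset.mem_insert.mp hc with hc | hc
  · exact hv ((Prod.mk.inj hc).2 ▸ hw)
  · exact hv (hA _ hc).2

theorem not_strongConn_externalExpansion_erase_outArc (hA : ∀ a ∈ A, a.1 ∈ V ∧ a.2 ∈ V)
    (hu : u ∈ V) (hw : w ∈ V) (hv : v ∉ V) :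
    ¬ StrongConn (insert v V) ((insert (u, v) (insert (v, w) A)).erase (v, w)) := by
  refine not_strongConn_of_forall_not_mem_out (Finset.mem_insert_of_mem hw)
    (Finset.mem_insert_self v V) (ne_of_mem_of_not_mem hw hv) fun c hc => ?_
  obtain ⟨hne, hc⟩ := Finset.mem_erase.mp hc
  rcases Finset.mem_insert.mp hc with hc | hc
  · exact hv ((Prod.mk.inj hc).1 ▸ hu)
  rcases Finset.mem_insert.mp hc with hc | hc
  · exact hne hc
  · exact hv (hA _ hc).1

end StrongConn

theorem stmt_12_general {α : Type*} [DecidableEq α] (V : Finset α) (A : Finset (α × α))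
    (u w v : α) (hg : GoodDigraph V A) (h : MSC V A)
    (hu : u ∈ V) (hw : w ∈ V) (hnA : (u, w) ∉ A) (hv : v ∉ V) :
    MSC (insert v V) (insert (u, v) (insert (v, w) A)) ↔
      ∀ p q : α, TransArc (insert (u, w) A) p q → (p, q) = (u, w) := by
  have hA : ∀ a ∈ A, a.1 ∈ V ∧ a.2 ∈ V := fun a ha => ⟨(hg.2 a ha).1, (hg.2 a ha).2.1⟩
  have hC : StrongConn V (insert (u, w) A) := fun x hx y hy =>
    (h.1 x hx y hy).mono_of_arcs fun a ha => .single (Finset.mem_insert_of_mem ha)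
  have erase_old : ∀ a ∈ A,
      StrongConn (insert v V) ((insert (u, v) (insert (v, w) A)).erase a) ↔
        TransArc (insert (u, w) A) a.1 a.2 := fun a ha => by
    rw [strongConn_externalExpansion_erase_iff hA hu hw hv ha,
      ← Finset.erase_insert_of_ne (ne_of_mem_of_not_mem ha hnA).symm]
    exact strongConn_erase_iff_transArc hC (hA a ha).1 (hA a ha).2 (Finset.mem_insert_of_mem ha)
  constructor
  · intro hmsc p q htr
    by_contra hne
    have hpq : (p, q) ∈ A := (Finset.mem_insert.mp htr.1).resolve_left hne
    exact hmsc.2 (p, q) (by simp [hpq]) ((erase_old _ hpq).mpr htr)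
  · intro hT
    refine ⟨(strongConn_externalExpansion_iff hA hu hw hv).mpr hC, ?_⟩
    simp only [Finset.forall_mem_insert]
    exact ⟨not_strongConn_externalExpansion_erase_inArc hA hu hw hv,
      not_strongConn_externalExpansion_erase_outArc hA hu hw hv,
      fun a ha hsc => hnA (hT a.1 a.2 ((erase_old a ha).mp hsc) ▸ ha)⟩

/-- for an MSC digraph `D` and vertices `u ≠ w` with `(u,w) ∉ A`,
the external expansion `e_{uw}(D)` by a new vertex `v` is MSC iff the digraph
`D + (u,w)` has no transitive arc distinct from `(u,w)`. -/
theorem stmt_12 {α : Type*} [DecidableEq α] (V : Finset α) (A : Finset (α × α))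
    (u w v : α) (hg : GoodDigraph V A) (h : MSC V A)
    (hu : u ∈ V) (hw : w ∈ V) (huw : u ≠ w) (hnA : (u, w) ∉ A) (hv : v ∉ V) :
    MSC (insert v V) (insert (u, v) (insert (v, w) A)) ↔
      ∀ p q : α, TransArc (insert (u, w) A) p q → (p, q) = (u, w) :=
  stmt_12_general V A u w v hg h hu hw hnA hv
end

section
/- Let D* = (V, A*) be a minimal strongly connected digraph of order n ≥ 3 and let v ∈ V be a linear vertex of D*. Then there exists a minimal strongly connected digraph D on the vertex set V \ {v} such that D* is either an internal or an external expansion of D by the vertex v. -/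
private lemma reach_mono' {α : Type*} {A B : Finset (α × α)}
    (h : ∀ p ∈ A, Reach B p.1 p.2) {x y : α} (hr : Reach A x y) : Reach B x y := by
  induction hr with
  | refl => exact Relation.ReflTransGen.refl
  | tail hstep harc ih => exact ih.trans (h _ harc)

private lemma splice {α : Type*} [DecidableEq α] {A C : Finset (α × α)} {v u w : α}
    (hwv : w ≠ v)
    (hin : ∀ p ∈ A, p.2 = v → p = (u, v)) (hout : ∀ p ∈ A, p.1 = v → p = (v, w))
    (hC : ∀ p ∈ A, p.1 ≠ v → p.2 ≠ v → p ∈ C) (hcs : Reach C u w)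
    {x y : α} (hxy : Reach A x y) (hy : y ≠ v) :
    (x = v → Reach C w y) ∧ (x ≠ v → Reach C x y) := by
  induction hxy using Relation.ReflTransGen.head_induction_on with
  | refl => exact ⟨fun h => absurd h hy, fun _ => Relation.ReflTransGen.refl⟩
  | @head a b harc hr ih =>
    by_cases ha : a = v
    · have hab : (a, b) = (v, w) := hout _ harc ha
      have hb : b = w := congrArg Prod.snd hab
      refine ⟨fun _ => ?_, fun h => absurd ha h⟩
      rw [← hb]
      exact ih.2 (hb ▸ hwv)
    · refine ⟨fun h => absurd h ha, fun _ => ?_⟩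
      by_cases hb : b = v
      · have hab : (a, b) = (u, v) := hin _ harc hb
        have hau : a = u := congrArg Prod.fst hab
        rw [hau]
        exact hcs.trans (ih.1 hb)
      · exact Relation.ReflTransGen.head (hC _ harc ha hb) (ih.2 hb)

private lemma sc_lift {α : Type*} [DecidableEq α] {V : Finset α} {E F : Finset (α × α)}
    {v u w : α} (hw : w ∈ V.erase v) (hu : u ∈ V.erase v)
    (hsc : StrongConn (V.erase v) E)
    (hmono : ∀ p ∈ E, Reach F p.1 p.2)
    (hout : (v, w) ∈ F) (hin : (u, v) ∈ F) :
    StrongConn V F := by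
  intro x hx y hy
  set x' := if x = v then w else x with hx'def
  set y' := if y = v then u else y with hy'def
  have hx' : x' ∈ V.erase v := by
    rw [hx'def]; split_ifs with h
    · exact hw
    · exact Finset.mem_erase.mpr ⟨h, hx⟩
  have hy' : y' ∈ V.erase v := by
    rw [hy'def]; split_ifs with h
    · exact hu
    · exact Finset.mem_erase.mpr ⟨h, hy⟩
  have h1 : Reach F x' y' := reach_mono' hmono (hsc x' hx' y' hy')
  have h2 : Reach F x x' := by
    rw [hx'def]; split_ifs with h
    · rw [h]; exact Relation.ReflTransGen.single hout
    · exact Relation.ReflTransGen.refl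
  have h3 : Reach F y' y := by
    rw [hy'def]; split_ifs with h
    · rw [h]; exact Relation.ReflTransGen.single hin
    · exact Relation.ReflTransGen.refl
  exact h2.trans (h1.trans h3)

/-- every MSC digraph of order `n ≥ 3` with a linear vertex `v`
is the (internal or external) expansion by `v` of an MSC digraph on `V \ {v}`. -/
theorem stmt_13 {α : Type*} [DecidableEq α] (V : Finset α) (A : Finset (α × α))
    (hg : GoodDigraph V A) (h : MSC V A) (hn : 3 ≤ V.card)
    (v : α) (hv : v ∈ V) (hlin : LinearVertex A v) :
    ∃ A' : Finset (α × α), MSC (V.erase v) A' ∧ IsExpansionBy v (V.erase v) A' V A := by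
  classical
  -- extract the unique in-arc (u,v)
  obtain ⟨ei, hei⟩ := Finset.card_eq_one.mp hlin.1
  obtain ⟨eo, heo⟩ := Finset.card_eq_one.mp hlin.2
  set u := ei.1 with hu_def
  set w := eo.2 with hw_def
  have hei_mem : ei ∈ A.filter (fun a => a.2 = v) := hei ▸ Finset.mem_singleton_self ei
  have heo_mem : eo ∈ A.filter (fun a => a.1 = v) := heo ▸ Finset.mem_singleton_self eo
  have hei_eq : ei = (u, v) := by
    have := (Finset.mem_filter.mp hei_mem).2
    exact Prod.ext rfl this
  have heo_eq : eo = (v, w) := by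
    have := (Finset.mem_filter.mp heo_mem).2
    exact Prod.ext this rfl
  have hein : (u, v) ∈ A := hei_eq ▸ (Finset.mem_filter.mp hei_mem).1
  have heout : (v, w) ∈ A := heo_eq ▸ (Finset.mem_filter.mp heo_mem).1
  have hin_unique : ∀ p ∈ A, p.2 = v → p = (u, v) := by
    intro p hp hpv
    have : p ∈ A.filter (fun a => a.2 = v) := Finset.mem_filter.mpr ⟨hp, hpv⟩
    rw [hei] at this
    rw [Finset.mem_singleton.mp this, hei_eq]
  have hout_unique : ∀ p ∈ A, p.1 = v → p = (v, w) := by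
    intro p hp hpv
    have : p ∈ A.filter (fun a => a.1 = v) := Finset.mem_filter.mpr ⟨hp, hpv⟩
    rw [heo] at this
    rw [Finset.mem_singleton.mp this, heo_eq]
  have hu_ne : u ≠ v := (hg.2 _ hein).2.2
  have hw_ne : w ≠ v := fun h => (hg.2 _ heout).2.2 h.symm
  have huV : u ∈ V.erase v := Finset.mem_erase.mpr ⟨hu_ne, (hg.2 _ hein).1⟩
  have hwV : w ∈ V.erase v := Finset.mem_erase.mpr ⟨hw_ne, (hg.2 _ heout).2.1⟩
  set B := (A.erase (u, v)).erase (v, w) with hB_def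
  have hBsub : B ⊆ A := fun p hp =>
    Finset.mem_of_mem_erase (Finset.mem_of_mem_erase hp)
  have hBC : ∀ p ∈ A, p.1 ≠ v → p.2 ≠ v → p ∈ B := by
    intro p hp h1 h2
    refine Finset.mem_erase.mpr ⟨fun he => h1 (congrArg Prod.fst he), ?_⟩
    exact Finset.mem_erase.mpr ⟨fun he => h2 (congrArg Prod.snd he), hp⟩
  have hA_eq : A = insert (u, v) (insert (v, w) B) := by
    have h1 : (v, w) ∈ A.erase (u, v) := by
      refine Finset.mem_erase.mpr ⟨fun he => hu_ne (congrArg Prod.fst he).symm, heout⟩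
    rw [hB_def, Finset.insert_erase h1, Finset.insert_erase hein]
  by_cases hSC : StrongConn (V.erase v) B
  · -- external expansion
    refine ⟨B, ⟨hSC, ?_⟩, Finset.notMem_erase v V, (Finset.insert_erase hv).symm,
      Or.inr ⟨u, huV, w, hwV, hA_eq⟩⟩
    intro a ha hcon
    have haA : a ∈ A := hBsub ha
    have hane1 : a ≠ (v, w) := (Finset.mem_erase.mp ha).1
    have hane2 : a ≠ (u, v) := (Finset.mem_erase.mp (Finset.mem_of_mem_erase ha)).1
    refine h.2 a haA (sc_lift hwV huV hcon ?_ ?_ ?_)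
    · intro p hp
      refine Relation.ReflTransGen.single (Finset.mem_erase.mpr
        ⟨(Finset.mem_erase.mp hp).1, hBsub (Finset.mem_of_mem_erase hp)⟩)
    · exact Finset.mem_erase.mpr ⟨fun he => hane1 he.symm, heout⟩
    · exact Finset.mem_erase.mpr ⟨fun he => hane2 he.symm, hein⟩
  · -- internal expansion
    have huw_notA : (u, w) ∉ A := by
      intro huw
      by_cases huw_eq : u = w
      · exact (hg.2 _ huw).2.2 huw_eq
      · refine h.2 (u, w) huw ?_
        intro x hx y hy
        refine reach_mono' ?_ (h.1 x hx y hy)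
        intro p hp
        by_cases hpe : p = (u, w)
        · rw [hpe]
          have h1 : (u, v) ∈ A.erase (u, w) := Finset.mem_erase.mpr
            ⟨fun he => hw_ne ((Prod.mk.injEq _ _ _ _).mp he).2.symm, hein⟩
          have h2 : (v, w) ∈ A.erase (u, w) := Finset.mem_erase.mpr
            ⟨fun he => hu_ne ((Prod.mk.injEq _ _ _ _).mp he).1.symm, heout⟩
          exact (Relation.ReflTransGen.single h1).trans (Relation.ReflTransGen.single h2)
        · exact Relation.ReflTransGen.single (Finset.mem_erase.mpr ⟨hpe, hp⟩)
    set A' := insert (u, w) B with hA'_def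
    have hsplice : StrongConn (V.erase v) A' := by
      intro x hx y hy
      have hxV := Finset.mem_erase.mp hx
      have hyV := Finset.mem_erase.mp hy
      refine (splice hw_ne hin_unique hout_unique ?_ ?_ (h.1 x hxV.2 y hyV.2) hyV.1).2 hxV.1
      · intro p hp h1 h2
        exact Finset.mem_insert_of_mem (hBC p hp h1 h2)
      · exact Relation.ReflTransGen.single (Finset.mem_insert_self _ _)
    have huwB : (u, w) ∉ B := fun hh => huw_notA (hBsub hh)
    have hA'er : A'.erase (u, w) = B := Finset.erase_insert huwB
    refine ⟨A', ⟨hsplice, ?_⟩, Finset.notMem_erase v V, (Finset.insert_erase hv).symm,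
      Or.inl ⟨u, w, Finset.mem_insert_self _ _, by rw [hA'er]; exact hA_eq⟩⟩
    intro a ha hcon
    by_cases hauw : a = (u, w)
    · rw [hauw, hA'er] at hcon
      exact hSC hcon
    · have haB : a ∈ B := (Finset.mem_insert.mp ha).resolve_left hauw
      have haA : a ∈ A := hBsub haB
      have hane1 : a ≠ (v, w) := (Finset.mem_erase.mp haB).1
      have hane2 : a ≠ (u, v) := (Finset.mem_erase.mp (Finset.mem_of_mem_erase haB)).1
      have hre : A'.erase a = insert (u, w) (B.erase a) := by
        rw [hA'_def, Finset.erase_insert_of_ne (Ne.symm hauw)]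
      rw [hre] at hcon
      have h1 : (u, v) ∈ A.erase a := Finset.mem_erase.mpr ⟨fun he => hane2 he.symm, hein⟩
      have h2 : (v, w) ∈ A.erase a := Finset.mem_erase.mpr ⟨fun he => hane1 he.symm, heout⟩
      refine h.2 a haA (sc_lift hwV huV hcon ?_ h2 h1)
      intro p hp
      rcases Finset.mem_insert.mp hp with hpe | hpB
      · rw [hpe]
        exact (Relation.ReflTransGen.single h1).trans (Relation.ReflTransGen.single h2)
      · exact Relation.ReflTransGen.single (Finset.mem_erase.mpr
          ⟨(Finset.mem_erase.mp hpB).1, hBsub (Finset.mem_of_mem_erase hpB)⟩)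
end
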